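/- There exists δ₀ with 0 < δ₀ < π/4 such that for every δ ∈ (0, δ₀) and every t ∈ [δ, π/2 − δ], the function ε₀(t) = (t − δ)³ · (12(π − 3δ − t)·cos δ − (π − 4δ)(2π − 5δ − 3t)·sin δ) / (3(π − 4δ)³) satisfies 0 ≤ deriv ε₀ t ≤ Real.sin t. -/

import Mathlib

/-!
Differentiating gives `ε₀' t = (t - δ)² q(t) / (3(π - 4δ)³)` with `q = eps0Factor δ` affine
in `t` and nonnegative on `[δ, π/2 - δ]` for small `δ`, whence `ε₀' ≥ 0`. For the upper bound,
crude estimates give `ε₀' t ≤ t - t³/6 ≤ sin t` up to `t = 23/20`. On `[23/20, b]`, `b = π/2 - δ`,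
the function `sin - ε₀'` is convex since `ε₀''' ≤ -1 ≤ -sin`, and it vanishes to first order at `b`
(`ε₀'(b) = cos δ = sin b`, `ε₀''(b) = sin δ = cos b`), so it is nonnegative there.
-/

open Real

/-- The explicit polynomial middle piece of the profile-modification function. -/
noncomputable def eps0 (δ t : ℝ) : ℝ :=
  (t - δ) ^ 3 *
    (12 * (π - 3 * δ - t) * Real.cos δ - (π - 4 * δ) * (2 * π - 5 * δ - 3 * t) * Real.sin δ) /
    (3 * (π - 4 * δ) ^ 3)

theorem nonneg_of_second_deriv_nonneg_of_right_eq_zero {g g' g'' : ℝ → ℝ} {a b : ℝ}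
    (hg : ∀ x ∈ Set.Icc a b, HasDerivAt g (g' x) x)
    (hg' : ∀ x ∈ Set.Icc a b, HasDerivAt g' (g'' x) x)
    (hg'' : ∀ x ∈ Set.Ioo a b, 0 ≤ g'' x) (hb : g b = 0) (hb' : g' b = 0) :
    ∀ x ∈ Set.Icc a b, 0 ≤ g x := by
  intro x hx
  have hab : b ∈ Set.Icc a b := ⟨hx.1.trans hx.2, le_rfl⟩
  have hg'_mono : MonotoneOn g' (Set.Icc a b) := by
    refine monotoneOn_of_hasDerivWithinAt_nonneg (f' := g'') (convex_Icc a b)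
      (fun y hy => (hg' y hy).continuousAt.continuousWithinAt) (fun y hy => ?_) ?_
    · exact (hg' y (interior_subset hy)).hasDerivWithinAt
    · simpa only [interior_Icc] using hg''
  have hg_anti : AntitoneOn g (Set.Icc a b) := by
    refine antitoneOn_of_hasDerivWithinAt_nonpos (f' := g') (convex_Icc a b)
      (fun y hy => (hg y hy).continuousAt.continuousWithinAt) (fun y hy => ?_) (fun y hy => ?_)
    · exact (hg y (interior_subset hy)).hasDerivWithinAt
    · exact hb' ▸ hg'_mono (interior_subset hy) hab (interior_subset hy).2
  exact hb ▸ hg_anti hx hab hx.2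

noncomputable def eps0Factor (δ t : ℝ) : ℝ :=
  12 * cos δ * (3 * π - 8 * δ - 4 * t) - 6 * (π - 4 * δ) * (π - 2 * δ - 2 * t) * sin δ

noncomputable def eps0' (δ t : ℝ) : ℝ := (t - δ) ^ 2 * eps0Factor δ t / (3 * (π - 4 * δ) ^ 3)

noncomputable def eps0'' (δ t : ℝ) : ℝ :=
  (t - δ) * (2 * eps0Factor δ t + (t - δ) * (12 * (π - 4 * δ) * sin δ - 48 * cos δ)) /
    (3 * (π - 4 * δ) ^ 3)

noncomputable def eps0''' (δ t : ℝ) : ℝ :=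
  (12 * (π - 4 * δ) * sin δ * (6 * t - π - 2 * δ) - 72 * cos δ * (4 * t - π)) /
    (3 * (π - 4 * δ) ^ 3)

theorem hasDerivAt_eps0 (δ t : ℝ) : HasDerivAt (eps0 δ) (eps0' δ t) t := by
  have h : HasDerivAt (eps0 δ) _ t :=
    ((((hasDerivAt_id' t).sub_const δ).fun_pow 3).fun_mul
      ((((hasDerivAt_id' t).const_sub (π - 3 * δ)).const_mul 12).mul_const (cos δ) |>.fun_sub
        ((((hasDerivAt_id' t).const_mul 3).const_sub (2 * π - 5 * δ)).const_mul (π - 4 * δ)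
          |>.mul_const (sin δ)))).div_const (3 * (π - 4 * δ) ^ 3)
  refine h.congr_deriv ?_
  rw [eps0', eps0Factor]
  norm_num
  ring

theorem hasDerivAt_eps0Factor (δ t : ℝ) :
    HasDerivAt (eps0Factor δ) (12 * (π - 4 * δ) * sin δ - 48 * cos δ) t := by
  have h : HasDerivAt (eps0Factor δ) _ t :=
    (((hasDerivAt_id' t).const_mul 4).const_sub (3 * π - 8 * δ)).const_mul (12 * cos δ) |>.fun_sub
      ((((hasDerivAt_id' t).const_mul 2).const_sub (π - 2 * δ)).const_mul (6 * (π - 4 * δ))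
        |>.mul_const (sin δ))
  exact h.congr_deriv (by ring)

theorem hasDerivAt_eps0' (δ t : ℝ) : HasDerivAt (eps0' δ) (eps0'' δ t) t := by
  have h : HasDerivAt (eps0' δ) _ t :=
    ((((hasDerivAt_id' t).sub_const δ).fun_pow 2).fun_mul (hasDerivAt_eps0Factor δ t)).div_const
      (3 * (π - 4 * δ) ^ 3)
  refine h.congr_deriv ?_
  rw [eps0'']
  norm_num
  ring

theorem hasDerivAt_eps0'' (δ t : ℝ) : HasDerivAt (eps0'' δ) (eps0''' δ t) t := by
  have h : HasDerivAt (eps0'' δ) _ t :=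
    (((hasDerivAt_id' t).sub_const δ).fun_mul
      (((hasDerivAt_eps0Factor δ t).const_mul 2).fun_add
        (((hasDerivAt_id' t).sub_const δ).mul_const
          (12 * (π - 4 * δ) * sin δ - 48 * cos δ)))).div_const (3 * (π - 4 * δ) ^ 3)
  refine h.congr_deriv ?_
  rw [eps0''', eps0Factor]
  ring

theorem eps0'_pi_div_two_sub {δ : ℝ} (hδ : π - 4 * δ ≠ 0) : eps0' δ (π / 2 - δ) = cos δ := by
  rw [eps0', eps0Factor, div_eq_iff (mul_ne_zero three_ne_zero (pow_ne_zero 3 hδ))]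
  ring

theorem eps0''_pi_div_two_sub {δ : ℝ} (hδ : π - 4 * δ ≠ 0) : eps0'' δ (π / 2 - δ) = sin δ := by
  rw [eps0'', eps0Factor, div_eq_iff (mul_ne_zero three_ne_zero (pow_ne_zero 3 hδ))]
  ring

theorem eps0Factor_nonneg {δ t : ℝ} (hδ : 0 < δ) (hδ' : δ ≤ 1 / 100) (ht : δ ≤ t)
    (ht' : t ≤ π / 2 - δ) : 0 ≤ eps0Factor δ t := by
  have hπ := pi_lt_d2
  have hA : 0 ≤ π - 4 * δ := by linarith
  have hsin₀ : 0 ≤ sin δ := sin_nonneg_of_nonneg_of_le_pi hδ.le (by linarith)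
  have hsin : sin δ ≤ δ := sin_le hδ.le
  have hcos : 1 - δ ^ 2 / 2 ≤ cos δ := one_sub_sq_div_two_le_cos
  have hcos₀ : 0 ≤ cos δ := by nlinarith
  have hsmall : (π - 4 * δ) * sin δ ≤ 2 * cos δ := by nlinarith
  -- the difference is `48 cos δ (π/2 - δ - t) + 12 (π - 4δ) sin δ (t - δ)`
  have hlower : 6 * (π - 4 * δ) * (2 * cos δ - (π - 4 * δ) * sin δ) ≤ eps0Factor δ t := by
    have h₁ := mul_nonneg hcos₀ (by linarith : 0 ≤ 2 * π - 4 * δ - 4 * t)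
    have h₂ := mul_nonneg (mul_nonneg hA hsin₀) (by linarith : 0 ≤ 2 * t - 2 * δ)
    rw [eps0Factor]
    linarith
  exact le_trans (by have := sub_nonneg.2 hsmall; positivity) hlower

theorem eps0'_le_sin_of_le {δ t : ℝ} (hδ : 0 < δ) (hδ' : δ ≤ 1 / 100) (ht : δ ≤ t)
    (ht' : t ≤ 23 / 20) : eps0' δ t ≤ sin t := by
  have hπ := pi_lt_d2
  have hπ' := pi_gt_d2
  have ht₀ : 0 ≤ t := hδ.le.trans ht
  have hsin₀ : 0 ≤ sin δ := sin_nonneg_of_nonneg_of_le_pi hδ.le (by linarith)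
  have hK : 89 ≤ 3 * (π - 4 * δ) ^ 3 := by
    nlinarith [pow_le_pow_left₀ (by norm_num) (by linarith : (31 / 10 : ℝ) ≤ π - 4 * δ) 3]
  have hfactor : eps0Factor δ t ≤ 12 * (3 * π - 4 * t) := by
    have := mul_nonneg (mul_nonneg (by linarith : 0 ≤ π - 4 * δ)
      (by linarith : 0 ≤ π - 2 * δ - 2 * t)) hsin₀
    rw [eps0Factor]
    nlinarith [cos_le_one δ]
  have hquad : 12 * t * (3 * π - 4 * t) ≤ 89 * (1 - t ^ 2 / 6) := by
    nlinarith [mul_nonneg ht₀ (by linarith : 0 ≤ 315 / 100 - π)]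
  have hcubic : (t - δ) ^ 2 * eps0Factor δ t ≤ (t - t ^ 3 / 6) * (3 * (π - 4 * δ) ^ 3) :=
    calc (t - δ) ^ 2 * eps0Factor δ t ≤ (t - δ) ^ 2 * (12 * (3 * π - 4 * t)) :=
          mul_le_mul_of_nonneg_left hfactor (sq_nonneg _)
      _ ≤ t ^ 2 * (12 * (3 * π - 4 * t)) := by gcongr <;> linarith
      _ ≤ (t - t ^ 3 / 6) * 89 := by nlinarith [mul_le_mul_of_nonneg_left hquad ht₀]
      _ ≤ (t - t ^ 3 / 6) * (3 * (π - 4 * δ) ^ 3) := by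
          gcongr
          nlinarith
  calc eps0' δ t ≤ t - t ^ 3 / 6 := by rw [eps0', div_le_iff₀ (by linarith)]; exact hcubic
    _ ≤ sin t := sin_ge_sub_cube ht₀

theorem eps0'''_le_neg_one {δ t : ℝ} (hδ : 0 < δ) (hδ' : δ ≤ 1 / 100) (ht : 23 / 20 ≤ t)
    (ht' : t ≤ π / 2) : eps0''' δ t ≤ -1 := by
  have hπ := pi_lt_d2
  have hπ' := pi_gt_d2
  have hsin₀ : 0 ≤ sin δ := sin_nonneg_of_nonneg_of_le_pi hδ.le (by linarith)
  have hsin : sin δ ≤ δ := sin_le hδ.le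
  have hcos : 99 / 100 ≤ cos δ := by nlinarith [one_sub_sq_div_two_le_cos (x := δ)]
  have hK : 3 * (π - 4 * δ) ^ 3 ≤ 96 := by
    nlinarith [pow_le_pow_left₀ (by linarith) (by linarith : π - 4 * δ ≤ 315 / 100) 3]
  have hsin_term :
      (π - 4 * δ) * sin δ * (6 * t - π - 2 * δ) ≤ 315 / 100 * (1 / 100) * (63 / 10) := by
    gcongr <;> linarith
  have hcos_term : 100 ≤ 72 * cos δ * (4 * t - π) := by
    nlinarith [mul_le_mul hcos (by linarith : (145 / 100 : ℝ) ≤ 4 * t - π) (by norm_num)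
      (by linarith)]
  have hA : 0 < π - 4 * δ := by linarith
  rw [eps0''', div_le_iff₀ (by positivity)]
  linarith

theorem eps0'_le_sin_of_ge {δ t : ℝ} (hδ : 0 < δ) (hδ' : δ ≤ 1 / 100) (ht : 23 / 20 ≤ t)
    (ht' : t ≤ π / 2 - δ) : eps0' δ t ≤ sin t := by
  have hA : π - 4 * δ ≠ 0 := by linarith [pi_gt_three]
  have h := nonneg_of_second_deriv_nonneg_of_right_eq_zero (g := fun x => sin x - eps0' δ x)
    (g' := fun x => cos x - eps0'' δ x) (g'' := fun x => -sin x - eps0''' δ x)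
    (fun x _ => (hasDerivAt_sin x).sub (hasDerivAt_eps0' δ x))
    (fun x _ => (hasDerivAt_cos x).sub (hasDerivAt_eps0'' δ x))
    (fun x hx => by
      linarith [sin_le_one x, eps0'''_le_neg_one hδ hδ' hx.1.le (by linarith [hx.2])])
    (by simp only [sin_pi_div_two_sub, eps0'_pi_div_two_sub hA, sub_self])
    (by simp only [cos_pi_div_two_sub, eps0''_pi_div_two_sub hA, sub_self])
    t ⟨ht, ht'⟩
  exact sub_nonneg.1 h

/-- For all sufficiently small `δ > 0`, the derivative of `ε₀` satisfies
`0 ≤ ε₀' t ≤ sin t` on `[δ, π/2 - δ]`. -/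
theorem stmt_12 :
    ∃ δ₀ : ℝ, 0 < δ₀ ∧ δ₀ < π / 4 ∧
      ∀ δ ∈ Set.Ioo (0 : ℝ) δ₀, ∀ t ∈ Set.Icc δ (π / 2 - δ),
        0 ≤ deriv (eps0 δ) t ∧ deriv (eps0 δ) t ≤ Real.sin t := by
  refine ⟨1 / 100, by norm_num, by linarith [pi_gt_three], ?_⟩
  rintro δ ⟨hδ, hδ'⟩ t ⟨ht, ht'⟩
  rw [(hasDerivAt_eps0 δ t).deriv]
  refine ⟨?_, ?_⟩
  · have hA : 0 < π - 4 * δ := by linarith [pi_gt_three]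
    have := eps0Factor_nonneg hδ hδ'.le ht ht'
    rw [eps0']
    positivity
  · rcases le_total t (23 / 20) with hsmall | hlarge
    · exact eps0'_le_sin_of_le hδ hδ'.le ht hsmall
    · exact eps0'_le_sin_of_ge hδ hδ'.le hlarge ht'
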